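/- Let n ≥ 1. Let P be an n×n entrywise nonnegative matrix with row sums at most 1 and spectral radius ρ(P) < 1, and let p = (I − P)𝟙. Let B be an n×n entrywise nonnegative matrix and b ∈ ℝⁿ entrywise nonnegative with c_l·P ≤ B ≤ c_u·P and c_l·p ≤ b ≤ c_u·p entrywise for some 0 < c_l ≤ c_u. For z ∈ ℝⁿ with z ≥ 0 entrywise, define w_t = −B^t z − Σ_{k=0}^{t−1} B^k b. Then liminf_{t→∞} (w_t)_i > −∞ for every component i if and only if the spectral radius of B is strictly less than 1. -/

import Mathlib

set_option autoImplicit false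

open Finset Matrix Filter

/-- The spectral radius of a real square matrix: the maximum modulus of its complex
eigenvalues. -/
noncomputable def specRad {n : Type*} [Fintype n] [DecidableEq n] (M : Matrix n n ℝ) : ℝ :=
  sSup {x : ℝ | ∃ z : ℂ, z ∈ spectrum ℂ (M.map (Complex.ofReal : ℝ → ℂ)) ∧ x = ‖z‖}

/-!
If `ρ(B) < 1`, Gelfand's formula makes `∑ ‖Bᵏ‖` finite, so the iterates `w_t` are uniformly
bounded. Conversely, let `ρ(B) ≥ 1`. An eigenvector `v` for an eigenvalue of modulus `ρ(B)`
shows that at a coordinate `i` where `|v|` is maximal, every row `(Bᵏ)ᵢ` sums to at least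
`ρ(B)ᵏ ≥ 1`. Since `ρ(P) < 1`, every state terminates with positive probability within some
`T` steps, and `B ≥ c_l P`, `b ≥ c_l p` transfer this to `q = ∑_{m<T} Bᵐ b > 0`. Hence
`(Bᵏ q)ᵢ ≥ min q > 0` for all `k`, and as `∑_{k<t} Bᵏ q ≤ T ∑_{k<t+T} Bᵏ b`, the `i`-th
component of `∑_{k<t} Bᵏ b` grows linearly in `t`, driving `(w_t)ᵢ` to `-∞`.
-/

theorem summable_norm_pow_of_spectralRadius_lt_one {A : Type*} [NormedRing A]
    [NormedAlgebra ℂ A] [CompleteSpace A] {a : A} (h : spectralRadius ℂ a < 1) :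
    Summable fun k : ℕ => ‖a ^ k‖ := by
  obtain ⟨r, hρr, hr1⟩ := exists_between h
  have hr : r ≠ ⊤ := hr1.ne_top
  have hroot : ∀ᶠ k : ℕ in atTop, ENNReal.ofReal (‖a ^ k‖ ^ (1 / k : ℝ)) < r :=
    (spectrum.pow_norm_pow_one_div_tendsto_nhds_spectralRadius a).eventually_lt_const hρr
  refine .of_norm_bounded_eventually_nat (summable_geometric_of_lt_one ENNReal.toReal_nonneg
    (ENNReal.toReal_lt_of_lt_ofReal (by simpa using hr1))) ?_
  filter_upwards [hroot, eventually_ne_atTop 0] with k hk hk0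
  rw [norm_norm]
  calc ‖a ^ k‖ = (‖a ^ k‖ ^ (1 / k : ℝ)) ^ k := by
        rw [one_div, Real.rpow_inv_natCast_pow (norm_nonneg _) hk0]
    _ ≤ r.toReal ^ k :=
        pow_le_pow_left₀ (by positivity) ((ENNReal.ofReal_le_iff_le_toReal hr).mp hk.le) k

theorem Finset.sum_range_sum_range_add_le {M : Type*} [AddCommMonoid M] [PartialOrder M]
    [IsOrderedAddMonoid M] {f : ℕ → M} (hf : ∀ s, 0 ≤ f s) (t T : ℕ) :
    ∑ k ∈ range t, ∑ m ∈ range T, f (m + k) ≤ T • ∑ s ∈ range (t + T), f s := by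
  rw [sum_comm]
  refine (sum_le_card_nsmul _ _ _ fun m hm => ?_).trans_eq (by rw [card_range])
  calc ∑ k ∈ range t, f (m + k) ≤ ∑ s ∈ range (m + t), f s := by
        rw [sum_range_add]
        exact le_add_of_nonneg_left (sum_nonneg fun s _ => hf s)
    _ ≤ ∑ s ∈ range (t + T), f s :=
        sum_le_sum_of_subset_of_nonneg (range_subset_range.mpr (by simp at hm; omega))
          fun s _ _ => hf s

theorem liminf_coe_eq_bot_of_tendsto_atBot {α : Type*} {l : Filter α} [l.NeBot] {f : α → ℝ}
    (h : Tendsto f l atBot) : liminf (fun t => (f t : EReal)) l = ⊥ :=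
  (EReal.tendsto_coe_atBot.comp h).liminf_eq

theorem bot_lt_liminf_coe_of_forall_le {α : Type*} {l : Filter α} {f : α → ℝ} {c : ℝ}
    (h : ∀ t, c ≤ f t) : (⊥ : EReal) < liminf (fun t => (f t : EReal)) l :=
  (EReal.bot_lt_coe c).trans_le <|
    le_liminf_of_le (by isBoundedDefault) (.of_forall fun t => EReal.coe_le_coe_iff.mpr (h t))

namespace Matrix

section OrderedSemiring

variable {m n α : Type*} [Fintype n] [Semiring α] [PartialOrder α] [IsOrderedRing α]

theorem mulVec_le_mulVec {A A' : Matrix m n α} {x x' : n → α} (hA : ∀ i j, 0 ≤ A i j)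
    (hAA' : ∀ i j, A i j ≤ A' i j) (hx : 0 ≤ x) (hxx' : x ≤ x') : A *ᵥ x ≤ A' *ᵥ x' :=
  fun i => sum_le_sum fun j _ =>
    mul_le_mul (hAA' i j) (hxx' j) (hx j) ((hA i j).trans (hAA' i j))

theorem mulVec_nonneg {A : Matrix m n α} {x : n → α} (hA : ∀ i j, 0 ≤ A i j) (hx : 0 ≤ x) :
    0 ≤ A *ᵥ x := by
  simpa using mulVec_le_mulVec hA (fun _ _ => le_rfl) le_rfl hx

theorem pow_mulVec_le_pow_mulVec [DecidableEq n] {A A' : Matrix n n α} {x x' : n → α}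
    (hA : ∀ i j, 0 ≤ A i j) (hAA' : ∀ i j, A i j ≤ A' i j) (hx : 0 ≤ x) (hxx' : x ≤ x')
    (k : ℕ) : A ^ k *ᵥ x ≤ A' ^ k *ᵥ x' := by
  induction k with
  | zero => simpa using hxx'
  | succ k ih =>
    rw [pow_succ', pow_succ', ← mulVec_mulVec, ← mulVec_mulVec]
    exact mulVec_le_mulVec hA hAA' (mulVec_nonneg (pow_apply_nonneg hA k) hx) ih

end OrderedSemiring

theorem one_sub_mulVec_one_nonneg {n α : Type*} [Fintype n] [DecidableEq n] [Ring α]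
    [PartialOrder α] [IsOrderedRing α] {P : Matrix n n α} (h : ∀ i, ∑ j, P i j ≤ 1) :
    0 ≤ (1 - P) *ᵥ 1 := by
  rw [sub_mulVec, one_mulVec, sub_nonneg]
  intro i
  simpa [mulVec, dotProduct] using h i

theorem exists_mulVec_eq_smul_of_mem_spectrum {n K : Type*} [Fintype n] [DecidableEq n]
    [Field K] {A : Matrix n n K} {μ : K} (hμ : μ ∈ spectrum K A) :
    ∃ v ≠ 0, ∀ k : ℕ, A ^ k *ᵥ v = μ ^ k • v := by
  rw [← spectrum_toLin', ← Module.End.hasEigenvalue_iff_mem_spectrum] at hμ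
  obtain ⟨v, hv⟩ := hμ.exists_hasEigenvector
  exact ⟨v, hv.2, fun k => by rw [← toLin'_apply, toLin'_pow, hv.pow_apply]⟩

theorem norm_le_sum_apply_of_mulVec_eq_smul {n : Type*} [Fintype n] {M : Matrix n n ℝ}
    (hM : ∀ i j, 0 ≤ M i j) {μ : ℂ} {v : n → ℂ}
    (hμ : M.map (Complex.ofReal : ℝ → ℂ) *ᵥ v = μ • v) {i : n} (hi : ∀ j, ‖v j‖ ≤ ‖v i‖)
    (hvi : v i ≠ 0) : ‖μ‖ ≤ ∑ j, M i j := by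
  refine le_of_mul_le_mul_right ?_ (norm_pos_iff.mpr hvi)
  calc ‖μ‖ * ‖v i‖ = ‖∑ j, (M i j : ℂ) * v j‖ := by
        rw [← norm_mul, ← smul_eq_mul, ← Pi.smul_apply, ← hμ]
        rfl
    _ ≤ ∑ j, M i j * ‖v j‖ := (norm_sum_le _ _).trans_eq <| sum_congr rfl fun j _ => by
        rw [norm_mul, Complex.norm_real, Real.norm_of_nonneg (hM i j)]
    _ ≤ ∑ j, M i j * ‖v i‖ := sum_le_sum fun j _ => mul_le_mul_of_nonneg_left (hi j) (hM i j)
    _ = (∑ j, M i j) * ‖v i‖ := (sum_mul _ _ _).symm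

theorem map_ofReal_pow {n : Type*} [Fintype n] [DecidableEq n] (M : Matrix n n ℝ) (k : ℕ) :
    (M ^ k).map (Complex.ofReal : ℝ → ℂ) = M.map Complex.ofReal ^ k :=
  M.map_pow Complex.ofRealHom k

end Matrix

def expValue {n : Type*} [Fintype n] [DecidableEq n] (B : Matrix n n ℝ) (b z : n → ℝ)
    (t : ℕ) : n → ℝ :=
  -(B ^ t *ᵥ z) - ∑ k ∈ range t, B ^ k *ᵥ b

section

variable {n : Type*} [Fintype n] [DecidableEq n]

section SpectralRadius

theorem finite_norms_spectrum (M : Matrix n n ℝ) :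
    {x : ℝ | ∃ z : ℂ, z ∈ spectrum ℂ (M.map (Complex.ofReal : ℝ → ℂ)) ∧ x = ‖z‖}.Finite :=
  ((finite_spectrum _).image (‖·‖)).subset fun _ ⟨z, hz, hx⟩ => ⟨z, hz, hx.symm⟩

theorem norm_le_specRad {M : Matrix n n ℝ} {z : ℂ}
    (hz : z ∈ spectrum ℂ (M.map (Complex.ofReal : ℝ → ℂ))) : ‖z‖ ≤ specRad M :=
  le_csSup (finite_norms_spectrum M).bddAbove ⟨z, hz, rfl⟩

theorem exists_mem_spectrum_norm_eq_specRad {M : Matrix n n ℝ} (h : 0 < specRad M) :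
    ∃ z ∈ spectrum ℂ (M.map (Complex.ofReal : ℝ → ℂ)), ‖z‖ = specRad M := by
  have hne : {x : ℝ | ∃ z : ℂ, z ∈ spectrum ℂ (M.map (Complex.ofReal : ℝ → ℂ)) ∧
      x = ‖z‖}.Nonempty := by
    by_contra hempty
    rw [Set.not_nonempty_iff_eq_empty] at hempty
    simp [specRad, hempty] at h
  obtain ⟨z, hz, hx⟩ := hne.csSup_mem (finite_norms_spectrum M)
  exact ⟨z, hz, hx.symm⟩

theorem spectralRadius_map_ofReal_le_specRad (M : Matrix n n ℝ) :
    spectralRadius ℂ (M.map (Complex.ofReal : ℝ → ℂ)) ≤ ENNReal.ofReal (specRad M) :=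
  iSup₂_le fun _ hz => by
    rw [← enorm_eq_nnnorm, ← ofReal_norm]
    exact ENNReal.ofReal_le_ofReal (norm_le_specRad hz)

attribute [local instance] Matrix.linftyOpNormedAddCommGroup Matrix.linftyOpNormedRing
  Matrix.linftyOpNormedAlgebra

theorem summable_norm_pow_of_specRad_lt_one {M : Matrix n n ℝ} (h : specRad M < 1) :
    Summable fun k : ℕ => ‖M ^ k‖ := by
  have hρ := (spectralRadius_map_ofReal_le_specRad M).trans_lt (ENNReal.ofReal_lt_one.mpr h)
  have hnorm : ∀ N : Matrix n n ℝ, ‖N.map (Complex.ofReal : ℝ → ℂ)‖ = ‖N‖ := fun N => by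
    simp [linfty_opNorm_def]
  simpa only [← map_ofReal_pow, hnorm] using summable_norm_pow_of_spectralRadius_lt_one hρ

theorem exists_forall_pow_mulVec_one_lt_one {P : Matrix n n ℝ} (h : specRad P < 1) :
    ∃ T, ∀ i, (P ^ T *ᵥ 1) i < 1 := by
  obtain ⟨T, hT⟩ := ((summable_norm_pow_of_specRad_lt_one h).tendsto_atTop_zero
    |>.eventually_lt_const one_pos).exists
  refine ⟨T, fun i => ?_⟩
  calc (P ^ T *ᵥ 1) i ≤ ‖P ^ T *ᵥ 1‖ := (Real.le_norm_self _).trans (norm_le_pi_norm _ i)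
    _ ≤ ‖P ^ T‖ * ‖(1 : n → ℝ)‖ := linfty_opNorm_mulVec _ _
    _ ≤ ‖P ^ T‖ :=
        mul_le_of_le_one_right (norm_nonneg _) ((pi_norm_const_le (1 : ℝ)).trans_eq norm_one)
    _ < 1 := hT

theorem exists_forall_norm_expValue_le {B : Matrix n n ℝ} (h : specRad B < 1) (b z : n → ℝ) :
    ∃ C, ∀ t, ‖expValue B b z t‖ ≤ C := by
  have hB := summable_norm_pow_of_specRad_lt_one h
  set C := ∑' k, ‖B ^ k‖
  refine ⟨C * ‖z‖ + C * ‖b‖, fun t => ?_⟩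
  have hz : ‖B ^ t *ᵥ z‖ ≤ C * ‖z‖ := (linfty_opNorm_mulVec _ _).trans <|
    mul_le_mul_of_nonneg_right (hB.le_tsum t fun _ _ => norm_nonneg _) (norm_nonneg z)
  have hb : ‖∑ k ∈ range t, B ^ k *ᵥ b‖ ≤ C * ‖b‖ := calc
    ‖∑ k ∈ range t, B ^ k *ᵥ b‖ ≤ (∑ k ∈ range t, ‖B ^ k‖) * ‖b‖ := by
        rw [sum_mul]
        exact (norm_sum_le _ _).trans (sum_le_sum fun k _ => linfty_opNorm_mulVec _ _)
    _ ≤ C * ‖b‖ :=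
        mul_le_mul_of_nonneg_right (hB.sum_le_tsum _ fun _ _ => norm_nonneg _) (norm_nonneg b)
  calc ‖expValue B b z t‖ ≤ ‖B ^ t *ᵥ z‖ + ‖∑ k ∈ range t, B ^ k *ᵥ b‖ :=
        (norm_sub_le _ _).trans_eq (by rw [norm_neg])
    _ ≤ C * ‖z‖ + C * ‖b‖ := add_le_add hz hb

end SpectralRadius

theorem exists_forall_norm_pow_le_sum_pow_apply {M : Matrix n n ℝ} (hM : ∀ i j, 0 ≤ M i j)
    {μ : ℂ} (hμ : μ ∈ spectrum ℂ (M.map (Complex.ofReal : ℝ → ℂ))) :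
    ∃ i, ∀ k, ‖μ‖ ^ k ≤ ∑ j, (M ^ k) i j := by
  obtain ⟨v, hv0, hv⟩ := exists_mulVec_eq_smul_of_mem_spectrum hμ
  obtain ⟨i₀, hi₀⟩ := Function.ne_iff.mp hv0
  have : Nonempty n := ⟨i₀⟩
  obtain ⟨i, hi⟩ := Finite.exists_max fun j => ‖v j‖
  have hvi : v i ≠ 0 := fun h => hi₀ (norm_le_zero_iff.mp ((hi i₀).trans_eq (by simp [h])))
  refine ⟨i, fun k => ?_⟩
  rw [← norm_pow]
  refine norm_le_sum_apply_of_mulVec_eq_smul (pow_apply_nonneg hM k) ?_ hi hvi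
  rw [map_ofReal_pow]
  exact hv k

theorem exists_forall_one_le_sum_pow_apply {M : Matrix n n ℝ} (hM : ∀ i j, 0 ≤ M i j)
    (h : 1 ≤ specRad M) : ∃ i, ∀ k, 1 ≤ ∑ j, (M ^ k) i j := by
  obtain ⟨μ, hμ, hnorm⟩ := exists_mem_spectrum_norm_eq_specRad (one_pos.trans_le h)
  obtain ⟨i, hi⟩ := exists_forall_norm_pow_le_sum_pow_apply hM hμ
  exact ⟨i, fun k => (one_le_pow₀ (hnorm ▸ h)).trans (hi k)⟩

theorem exists_pos_pow_mulVec_one_sub_mulVec_one {P : Matrix n n ℝ} (h : specRad P < 1) :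
    ∃ T, ∀ i, ∃ m < T, 0 < (P ^ m *ᵥ ((1 - P) *ᵥ 1)) i := by
  obtain ⟨T, hT⟩ := exists_forall_pow_mulVec_one_lt_one h
  have htel : ∑ m ∈ range T, P ^ m *ᵥ ((1 - P) *ᵥ 1) = 1 - P ^ T *ᵥ 1 := calc
    _ = ((∑ m ∈ range T, P ^ m) * (1 - P)) *ᵥ 1 := by
        simp only [sum_mul, sum_mulVec, mulVec_mulVec]
    _ = 1 - P ^ T *ᵥ 1 := by rw [geom_sum_mul_neg, sub_mulVec, one_mulVec]
  refine ⟨T, fun i => ?_⟩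
  have hpos : ∑ _m ∈ range T, (0 : ℝ) < ∑ m ∈ range T, (P ^ m *ᵥ ((1 - P) *ᵥ 1)) i := by
    rw [sum_const_zero, ← Finset.sum_apply, htel]
    simpa using hT i
  obtain ⟨m, hm, hpos⟩ := exists_lt_of_sum_lt hpos
  exact ⟨m, mem_range.mp hm, hpos⟩

theorem exists_forall_sum_pow_mulVec_pos {c : ℝ} {P B : Matrix n n ℝ} {b : n → ℝ} (hc : 0 < c)
    (hP : ∀ i j, 0 ≤ P i j) (hProw : ∀ i, ∑ j, P i j ≤ 1) (hPspec : specRad P < 1)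
    (hPB : ∀ i j, c * P i j ≤ B i j) (hpb : c • ((1 - P) *ᵥ 1) ≤ b) :
    ∃ T, ∀ i, 0 < (∑ m ∈ range T, B ^ m *ᵥ b) i := by
  have hcP : ∀ i j, 0 ≤ (c • P) i j := fun i j => mul_nonneg hc.le (hP i j)
  have hp : 0 ≤ c • ((1 - P) *ᵥ 1) := smul_nonneg hc.le (one_sub_mulVec_one_nonneg hProw)
  have hcomp : ∀ m, (c • P) ^ m *ᵥ (c • ((1 - P) *ᵥ 1)) ≤ B ^ m *ᵥ b :=
    pow_mulVec_le_pow_mulVec hcP hPB hp hpb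
  have hterm : ∀ m, 0 ≤ B ^ m *ᵥ b :=
    fun m => (mulVec_nonneg (pow_apply_nonneg hcP m) hp).trans (hcomp m)
  obtain ⟨T, hT⟩ := exists_pos_pow_mulVec_one_sub_mulVec_one hPspec
  refine ⟨T, fun i => ?_⟩
  obtain ⟨m, hmT, hm⟩ := hT i
  have hscale : (c • P) ^ m *ᵥ (c • ((1 - P) *ᵥ 1))
      = c ^ (m + 1) • (P ^ m *ᵥ ((1 - P) *ᵥ 1)) := by
    rw [smul_pow, smul_mulVec, mulVec_smul, smul_smul, pow_succ]
  calc 0 < c ^ (m + 1) * (P ^ m *ᵥ ((1 - P) *ᵥ 1)) i := by positivity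
    _ ≤ (B ^ m *ᵥ b) i := by simpa [hscale] using hcomp m i
    _ ≤ (∑ m ∈ range T, B ^ m *ᵥ b) i := by
        rw [Finset.sum_apply]
        exact single_le_sum (fun k _ => hterm k i) (mem_range.mpr hmT)

theorem tendsto_sum_pow_mulVec_apply_atTop {B : Matrix n n ℝ} {b : n → ℝ} {T : ℕ} {i : n}
    (hB : ∀ i j, 0 ≤ B i j) (hb : 0 ≤ b) (hq : ∀ j, 0 < (∑ m ∈ range T, B ^ m *ᵥ b) j)
    (hrow : ∀ k, 1 ≤ ∑ j, (B ^ k) i j) :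
    Tendsto (fun t => (∑ k ∈ range t, B ^ k *ᵥ b) i) atTop atTop := by
  set q := ∑ m ∈ range T, B ^ m *ᵥ b
  have : Nonempty n := ⟨i⟩
  obtain ⟨j₀, hj₀⟩ := Finite.exists_min q
  have hT : 0 < (T : ℝ) := Nat.cast_pos.mpr <| Nat.pos_of_ne_zero fun hT => by
    simpa [q, hT] using hq i
  have hδ : ∀ k, q j₀ ≤ (B ^ k *ᵥ q) i := fun k => calc
    q j₀ ≤ q j₀ * ∑ j, (B ^ k) i j := le_mul_of_one_le_right (hq j₀).le (hrow k)
    _ = (B ^ k *ᵥ fun _ => q j₀) i := by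
        simp only [mulVec, dotProduct]
        rw [mul_comm, sum_mul]
    _ ≤ (B ^ k *ᵥ q) i :=
        mulVec_le_mulVec (pow_apply_nonneg hB k) (fun _ _ => le_rfl) (fun _ => (hq j₀).le) hj₀ i
  have hshift : ∀ k, (B ^ k *ᵥ q) i = ∑ m ∈ range T, (B ^ (m + k) *ᵥ b) i := fun k => by
    simp [q, mulVec_sum, mulVec_mulVec, ← pow_add, Finset.sum_apply, add_comm]
  have hlin : ∀ t : ℕ, q j₀ * t / T ≤ (∑ k ∈ range (t + T), B ^ k *ᵥ b) i := fun t => by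
    rw [div_le_iff₀ hT]
    calc q j₀ * t = ∑ _k ∈ range t, q j₀ := by simp [mul_comm]
      _ ≤ ∑ k ∈ range t, ∑ m ∈ range T, (B ^ (m + k) *ᵥ b) i :=
          sum_le_sum fun k _ => (hδ k).trans_eq (hshift k)
      _ ≤ T • ∑ s ∈ range (t + T), (B ^ s *ᵥ b) i :=
          sum_range_sum_range_add_le (fun s => mulVec_nonneg (pow_apply_nonneg hB s) hb i) t T
      _ = _ := by rw [nsmul_eq_mul, Finset.sum_apply, mul_comm]
  refine (tendsto_add_atTop_iff_nat T).mp (tendsto_atTop_mono hlin ?_)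
  exact (tendsto_natCast_atTop_atTop.const_mul_atTop (hq j₀)).atTop_div_const hT

theorem expValue_le_neg_sum {B : Matrix n n ℝ} {z : n → ℝ} (hB : ∀ i j, 0 ≤ B i j) (hz : 0 ≤ z)
    (b : n → ℝ) (t : ℕ) : expValue B b z t ≤ -∑ k ∈ range t, B ^ k *ᵥ b :=
  (sub_le_sub_right (neg_nonpos.mpr (mulVec_nonneg (pow_apply_nonneg hB t) hz)) _).trans_eq
    (zero_sub _)

end

theorem exp_value_bounded_iff_specRad_lt_one_general (n : ℕ)
    (P B : Matrix (Fin n) (Fin n) ℝ) (b z : Fin n → ℝ) (cl : ℝ)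
    (hcl : 0 < cl)
    (hP0 : ∀ i j, 0 ≤ P i j) (hProw : ∀ i, ∑ j, P i j ≤ 1) (hPspec : specRad P < 1)
    (hB0 : ∀ i j, 0 ≤ B i j) (hb0 : ∀ i, 0 ≤ b i)
    (hBl : ∀ i j, cl * P i j ≤ B i j)
    (hbl : ∀ i, cl * ((1 - P) *ᵥ (fun _ => (1 : ℝ))) i ≤ b i)
    (hz : ∀ i, 0 ≤ z i) :
    (∀ i : Fin n, (⊥ : EReal) < Filter.liminf (fun t : ℕ =>
        (((-((B ^ t) *ᵥ z) - ∑ k ∈ Finset.range t, (B ^ k) *ᵥ b) i : ℝ) : EReal))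
      Filter.atTop) ↔ specRad B < 1 := by
  change (∀ i, ⊥ < liminf (fun t => (expValue B b z t i : EReal)) atTop) ↔ _
  constructor
  · intro hbdd
    by_contra hρ
    obtain ⟨i, hrow⟩ := exists_forall_one_le_sum_pow_apply hB0 (not_lt.mp hρ)
    obtain ⟨T, hq⟩ := exists_forall_sum_pow_mulVec_pos hcl hP0 hProw hPspec hBl hbl
    have hw : Tendsto (fun t => expValue B b z t i) atTop atBot :=
      tendsto_atBot_mono (fun t => expValue_le_neg_sum hB0 hz b t i)
        (tendsto_neg_atTop_atBot.comp (tendsto_sum_pow_mulVec_apply_atTop hB0 hb0 hq hrow))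
    exact (hbdd i).ne' (liminf_coe_eq_bot_of_tendsto_atBot hw)
  · intro hρ i
    obtain ⟨C, hC⟩ := exists_forall_norm_expValue_le hρ b z
    exact bot_lt_liminf_coe_of_forall_le fun t =>
      neg_le_of_abs_le ((norm_le_pi_norm _ i).trans (hC t))

/-- A stationary policy's exponential value iterates
`w_t = −B^t z − Σ_{k<t} B^k b` (for a terminal exponential value `−z` with `z ≥ 0`) have all
components with `liminf > −∞` if and only if the spectral radius of `B` is strictly less
than `1`, where `B, b` are sandwiched between multiples of the transient substochastic
matrix `P` and its termination vector `p = (I−P)𝟙`. -/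
theorem exp_value_bounded_iff_specRad_lt_one (n : ℕ) (hn : 1 ≤ n)
    (P B : Matrix (Fin n) (Fin n) ℝ) (b z : Fin n → ℝ) (cl cu : ℝ)
    (hcl : 0 < cl) (hclu : cl ≤ cu)
    (hP0 : ∀ i j, 0 ≤ P i j) (hProw : ∀ i, ∑ j, P i j ≤ 1) (hPspec : specRad P < 1)
    (hB0 : ∀ i j, 0 ≤ B i j) (hb0 : ∀ i, 0 ≤ b i)
    (hBl : ∀ i j, cl * P i j ≤ B i j) (hBu : ∀ i j, B i j ≤ cu * P i j)
    (hbl : ∀ i, cl * ((1 - P) *ᵥ (fun _ => (1 : ℝ))) i ≤ b i)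
    (hbu : ∀ i, b i ≤ cu * ((1 - P) *ᵥ (fun _ => (1 : ℝ))) i)
    (hz : ∀ i, 0 ≤ z i) :
    (∀ i : Fin n, (⊥ : EReal) < Filter.liminf (fun t : ℕ =>
        (((-((B ^ t) *ᵥ z) - ∑ k ∈ Finset.range t, (B ^ k) *ᵥ b) i : ℝ) : EReal))
      Filter.atTop) ↔ specRad B < 1 :=
  exp_value_bounded_iff_specRad_lt_one_general n P B b z cl hcl hP0 hProw hPspec hB0 hb0 hBl hbl hz
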